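/- arXiv:1711.09463 — 3 statements merged into one kernel-verified Lean document; each statement's English description precedes it below -/
import Mathlib

section
/- If f, g are in a subalgebra D∞ of the domain of the generator L of a Markov semigroup on C(X), and Γ(g) = L(g²) - 2g·Lg is the carré du champ operator, then max(f)·Γ(g) ≥ L(fg²) - 2g·L(fg) + g²·Lf ≥ min(f)·Γ(g) pointwise on X. -/
open MeasureTheory Filter Topology

/-- square-field inequality
`max f · Γ(g) ≥ L(fg²) - 2g·L(fg) + g²·Lf ≥ min f · Γ(g)` pointwise, where
`Γ(g) = L(g²) - 2g·Lg` and `L` arises as the pointwise generator of a Markov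
transition kernel `p(t,x,·)` on the subalgebra `D∞`. -/
theorem stmt_0 {X : Type*} [MetricSpace X] [CompactSpace X] [Nonempty X]
    [MeasurableSpace X] [BorelSpace X]
    (p : ℝ → X → Measure X) (hp : ∀ t x, IsProbabilityMeasure (p t x))
    (D : Subalgebra ℝ C(X, ℝ)) (L : C(X, ℝ) → C(X, ℝ))
    (hL : ∀ h ∈ D, ∀ x : X,
      Tendsto (fun t : ℝ => (1 / t) * ((∫ y, h y ∂(p t x)) - h x))
        (nhdsWithin 0 (Set.Ioi 0)) (nhds (L h x)))
    (f g : C(X, ℝ)) (hf : f ∈ D) (hg : g ∈ D) (x : X) :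
    L (f * g * g) x - 2 * g x * L (f * g) x + g x * g x * L f x
        ≤ (⨆ y, f y) * (L (g * g) x - 2 * g x * L g x)
    ∧ (⨅ y, f y) * (L (g * g) x - 2 * g x * L g x)
        ≤ L (f * g * g) x - 2 * g x * L (f * g) x + g x * g x * L f x := by
  haveI : ∀ t, IsProbabilityMeasure (p t x) := fun t => hp t x
  -- integrability of any continuous map
  have hint : ∀ (t : ℝ) (h : C(X, ℝ)), Integrable (fun y => h y) (p t x) := fun t h =>
    h.continuous.integrable_of_hasCompactSupport (HasCompactSupport.of_compactSpace h)
  -- abbreviations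
  set A : ℝ → ℝ := fun t =>
    (1 / t) * ((∫ y, (f * g * g) y ∂(p t x)) - (f * g * g) x)
    - 2 * g x * ((1 / t) * ((∫ y, (f * g) y ∂(p t x)) - (f * g) x))
    + g x * g x * ((1 / t) * ((∫ y, f y ∂(p t x)) - f x)) with hA
  set B : ℝ → ℝ := fun t =>
    (1 / t) * ((∫ y, (g * g) y ∂(p t x)) - (g * g) x)
    - 2 * g x * ((1 / t) * ((∫ y, g y ∂(p t x)) - g x)) with hB
  have hgg : g * g ∈ D := mul_mem hg hg
  have hfg : f * g ∈ D := mul_mem hf hg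
  have hfgg : f * g * g ∈ D := mul_mem hfg hg
  have hAlim : Tendsto A (nhdsWithin 0 (Set.Ioi 0))
      (nhds (L (f * g * g) x - 2 * g x * L (f * g) x + g x * g x * L f x)) :=
    (((hL _ hfgg x).sub ((hL _ hfg x).const_mul (2 * g x))).add
      ((hL _ hf x).const_mul (g x * g x)))
  have hBlim : Tendsto B (nhdsWithin 0 (Set.Ioi 0))
      (nhds (L (g * g) x - 2 * g x * L g x)) :=
    ((hL _ hgg x).sub ((hL _ hg x).const_mul (2 * g x)))
  -- rewrite A and B as integrals of nonnegative quantities times f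
  have hAeq : ∀ t : ℝ, A t = (1 / t) * ∫ y, f y * (g y - g x) ^ 2 ∂(p t x) := by
    intro t
    have e1 : (fun y => f y * (g y - g x) ^ 2)
        = fun y => ((f * g * g) y - 2 * g x * (f * g) y) + g x * g x * f y := by
      funext y; simp [ContinuousMap.mul_apply]; ring
    have i1 : Integrable (fun y => (f * g * g) y - 2 * g x * (f * g) y) (p t x) :=
      (hint t (f * g * g)).sub ((hint t (f * g)).const_mul _)
    rw [hA, e1, integral_add i1 ((hint t f).const_mul _),
      integral_sub (hint t (f * g * g)) ((hint t (f * g)).const_mul _),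
      integral_const_mul, integral_const_mul]
    simp [ContinuousMap.mul_apply]; ring
  have hBeq : ∀ t : ℝ, B t = (1 / t) * ∫ y, (g y - g x) ^ 2 ∂(p t x) := by
    intro t
    have e1 : (fun y => (g y - g x) ^ 2)
        = fun y => ((g * g) y - 2 * g x * g y) + g x * g x * (1 : C(X, ℝ)) y := by
      funext y; simp [ContinuousMap.mul_apply]; ring
    have i1 : Integrable (fun y => (g * g) y - 2 * g x * g y) (p t x) :=
      (hint t (g * g)).sub ((hint t g).const_mul _)
    rw [hB, e1, integral_add i1 ((hint t 1).const_mul _),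
      integral_sub (hint t (g * g)) ((hint t g).const_mul _),
      integral_const_mul, integral_const_mul]
    simp [ContinuousMap.mul_apply]
    ring
  -- bounds on f
  have hbdd : BddAbove (Set.range f) := (isCompact_range f.continuous).bddAbove
  have hbdd' : BddBelow (Set.range f) := (isCompact_range f.continuous).bddBelow
  have hsup : ∀ y, f y ≤ ⨆ y, f y := fun y => le_ciSup hbdd y
  have hinf : ∀ y, (⨅ y, f y) ≤ f y := fun y => ciInf_le hbdd' y
  -- pointwise inequalities for t > 0
  have hub : ∀ᶠ t in nhdsWithin (0 : ℝ) (Set.Ioi 0), A t ≤ (⨆ y, f y) * B t := by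
    filter_upwards [self_mem_nhdsWithin] with t (ht : (0:ℝ) < t)
    rw [hAeq t, hBeq t]
    have key : (∫ y, f y * (g y - g x) ^ 2 ∂(p t x))
        ≤ ∫ y, (⨆ y, f y) * (g y - g x) ^ 2 ∂(p t x) := by
      refine integral_mono ?_ ?_ ?_
      · exact (f.continuous.mul ((g.continuous.sub continuous_const).pow 2)).integrable_of_hasCompactSupport
          (HasCompactSupport.of_compactSpace _)
      · exact ((continuous_const.mul ((g.continuous.sub continuous_const).pow 2)).integrable_of_hasCompactSupport
          (HasCompactSupport.of_compactSpace _))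
      · intro y
        exact mul_le_mul_of_nonneg_right (hsup y) (sq_nonneg _)
    calc (1 / t) * ∫ y, f y * (g y - g x) ^ 2 ∂(p t x)
        ≤ (1 / t) * ∫ y, (⨆ y, f y) * (g y - g x) ^ 2 ∂(p t x) :=
          mul_le_mul_of_nonneg_left key (by positivity)
      _ = (⨆ y, f y) * ((1 / t) * ∫ y, (g y - g x) ^ 2 ∂(p t x)) := by
          rw [integral_const_mul]; ring
  have hlb : ∀ᶠ t in nhdsWithin (0 : ℝ) (Set.Ioi 0), (⨅ y, f y) * B t ≤ A t := by
    filter_upwards [self_mem_nhdsWithin] with t (ht : (0:ℝ) < t)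
    rw [hAeq t, hBeq t]
    have key : (∫ y, (⨅ y, f y) * (g y - g x) ^ 2 ∂(p t x))
        ≤ ∫ y, f y * (g y - g x) ^ 2 ∂(p t x) := by
      refine integral_mono ?_ ?_ ?_
      · exact ((continuous_const.mul ((g.continuous.sub continuous_const).pow 2)).integrable_of_hasCompactSupport
          (HasCompactSupport.of_compactSpace _))
      · exact (f.continuous.mul ((g.continuous.sub continuous_const).pow 2)).integrable_of_hasCompactSupport
          (HasCompactSupport.of_compactSpace _)
      · intro y
        exact mul_le_mul_of_nonneg_right (hinf y) (sq_nonneg _)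
    calc (⨅ y, f y) * ((1 / t) * ∫ y, (g y - g x) ^ 2 ∂(p t x))
        = (1 / t) * ∫ y, (⨅ y, f y) * (g y - g x) ^ 2 ∂(p t x) := by
          rw [integral_const_mul]; ring
      _ ≤ (1 / t) * ∫ y, f y * (g y - g x) ^ 2 ∂(p t x) :=
          mul_le_mul_of_nonneg_left key (by positivity)
  constructor
  · exact le_of_tendsto_of_tendsto hAlim (hBlim.const_mul _) hub
  · exact le_of_tendsto_of_tendsto (hBlim.const_mul _) hAlim hlb
end

section
/- The relative entropy H(μ,π) = sup_{V∈C(X)} (∫V dμ - log ∫ e^V dπ) between two probability measures on a compact metric space is finite if and only if μ is absolutely continuous with respect to π with density ψ = dμ/dπ satisfying log ψ ∈ L¹(μ), in which case H(μ,π) = ∫ log ψ dμ = ∫ ψ log ψ dπ. -/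
/-!
Gibbs' inequality, applied to `μ` and the tilted measure `e^V π / ∫ e^V dπ`, gives
`∫ V dμ - log ∫ e^V dπ ≤ ∫ log ψ dμ` for every bounded `V`.

For the converse bounds, note that on functions bounded by `M` the functional
`V ↦ ∫ V dμ - log ∫ e^V dπ` is Lipschitz for the `L¹(μ + π)` distance. Approximating in
`L¹(μ + π)` by continuous functions clamped to `[-M, M]` therefore shows that the supremum does not
change when `V` ranges over bounded measurable functions. Among these, `n • 1_A` with
`π A = 0 < μ A` makes it infinite when `μ` is not absolutely continuous. The truncations
`log (max (min ψ e^b) e^a)` have `∫ e^V dπ ≤ 1 + e^a`: with `a = -n`, `b = n` dominated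
convergence gives `∫ log ψ dμ` as a lower bound, and with `a = 0`, `b = n` monotone convergence
shows that a finite supremum forces `(log ψ)⁺ ∈ L¹(μ)`. The negative part is always integrable,
since `t log t ≥ -1`.
-/

open MeasureTheory Filter Topology

lemma Real.exp_sub_exp_le_exp_mul_abs {u v M : ℝ} (hu : u ≤ M) :
    Real.exp u - Real.exp v ≤ Real.exp M * |u - v| := by
  have tangent : Real.exp u * (1 + (v - u)) ≤ Real.exp v := by
    calc Real.exp u * (1 + (v - u)) ≤ Real.exp u * Real.exp (v - u) := by
          gcongr; linarith [Real.add_one_le_exp (v - u)]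
      _ = Real.exp v := by rw [← Real.exp_add]; ring_nf
  rcases le_total v u with h | h
  · rw [abs_of_nonneg (sub_nonneg.2 h)]
    nlinarith [Real.exp_le_exp.2 hu]
  · nlinarith [Real.exp_le_exp.2 h, abs_nonneg (u - v), Real.exp_pos M]

lemma Real.log_sub_log_le_div {a b : ℝ} (ha : 0 < a) (hb : 0 < b) :
    Real.log a - Real.log b ≤ (a - b) / b := by
  rw [← Real.log_div ha.ne' hb.ne', sub_div, div_self hb.ne']
  exact Real.log_le_sub_one_of_pos (div_pos ha hb)

lemma abs_clamp_sub_le {a b M : ℝ} (hb : |b| ≤ M) :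
    |max (min a M) (-M) - b| ≤ |a - b| := by
  rw [abs_le] at hb
  grind

noncomputable def donskerVaradhan {α : Type*} [MeasurableSpace α] (μ ν : Measure α)
    (V : α → ℝ) : ℝ :=
  ∫ x, V x ∂μ - Real.log (∫ x, Real.exp (V x) ∂ν)

section Bounded

variable {α : Type*} [MeasurableSpace α] {μ ν : Measure α} {V W : α → ℝ} {M : ℝ}

lemma integrable_of_abs_le [IsFiniteMeasure μ] (hV : Measurable V) (hVM : ∀ x, |V x| ≤ M) :
    Integrable V μ :=
  .of_bound hV.aestronglyMeasurable M (ae_of_all _ hVM)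

lemma integrable_exp_of_abs_le [IsFiniteMeasure μ] (hV : Measurable V)
    (hVM : ∀ x, |V x| ≤ M) : Integrable (fun x ↦ Real.exp (V x)) μ :=
  integrable_of_abs_le (μ := μ) hV.exp fun x ↦ by
    rw [abs_of_pos (Real.exp_pos _)]
    exact Real.exp_le_exp.2 (abs_le.1 (hVM x)).2

lemma exp_neg_le_integral_exp [IsProbabilityMeasure μ] (hV : Measurable V)
    (hVM : ∀ x, |V x| ≤ M) : Real.exp (-M) ≤ ∫ x, Real.exp (V x) ∂μ := by
  simpa using integral_mono (integrable_const (μ := μ) (Real.exp (-M)))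
    (integrable_exp_of_abs_le hV hVM) fun x ↦ Real.exp_le_exp.2 (neg_le_of_abs_le (hVM x))

lemma donskerVaradhan_le_add [IsFiniteMeasure μ] [IsProbabilityMeasure ν]
    (hV : Measurable V) (hW : Measurable W) (hVM : ∀ x, |V x| ≤ M) (hWM : ∀ x, |W x| ≤ M) :
    donskerVaradhan μ ν V ≤ donskerVaradhan μ ν W + ∫ x, |V x - W x| ∂μ
      + Real.exp (2 * M) * ∫ x, |V x - W x| ∂ν := by
  have hVW (ρ : Measure α) [IsFiniteMeasure ρ] : Integrable (fun x ↦ |V x - W x|) ρ :=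
    ((integrable_of_abs_le hV hVM).sub (integrable_of_abs_le hW hWM)).abs
  have h_lin : ∫ x, V x ∂μ - ∫ x, W x ∂μ ≤ ∫ x, |V x - W x| ∂μ := by
    rw [← integral_sub (integrable_of_abs_le hV hVM) (integrable_of_abs_le hW hWM)]
    exact integral_mono ((integrable_of_abs_le hV hVM).sub (integrable_of_abs_le hW hWM))
      (hVW μ) fun x ↦ le_abs_self _
  have h_exp : ∫ x, Real.exp (W x) ∂ν - ∫ x, Real.exp (V x) ∂ν
      ≤ Real.exp M * ∫ x, |V x - W x| ∂ν := by
    rw [← integral_sub (integrable_exp_of_abs_le hW hWM) (integrable_exp_of_abs_le hV hVM),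
      ← integral_const_mul]
    refine integral_mono ((integrable_exp_of_abs_le hW hWM).sub
      (integrable_exp_of_abs_le hV hVM)) ((hVW ν).const_mul _) fun x ↦ ?_
    simpa only [abs_sub_comm] using
      Real.exp_sub_exp_le_exp_mul_abs (v := V x) (abs_le.1 (hWM x)).2
  have hV_low := exp_neg_le_integral_exp (μ := ν) hV hVM
  have h_log : Real.log (∫ x, Real.exp (W x) ∂ν) - Real.log (∫ x, Real.exp (V x) ∂ν)
      ≤ Real.exp (2 * M) * ∫ x, |V x - W x| ∂ν := by
    refine (Real.log_sub_log_le_div (integral_exp_pos (integrable_exp_of_abs_le hW hWM))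
      ((Real.exp_pos _).trans_le hV_low)).trans ?_
    calc _ ≤ Real.exp M * (∫ x, |V x - W x| ∂ν) / Real.exp (-M) := by
          gcongr
      _ = Real.exp (2 * M) * ∫ x, |V x - W x| ∂ν := by
          rw [div_eq_mul_inv, ← Real.exp_neg, neg_neg, mul_right_comm, ← Real.exp_add, two_mul]
  unfold donskerVaradhan
  linarith

lemma integrable_of_monotone_of_integral_le
    {f : ℕ → α → ℝ} {F : α → ℝ} {c : ℝ} (hf : ∀ n, Integrable (f n) μ)
    (hf_nonneg : ∀ n x, 0 ≤ f n x) (hf_mono : ∀ x, Monotone fun n ↦ f n x)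
    (hf_tendsto : ∀ x, Tendsto (fun n ↦ f n x) atTop (𝓝 (F x)))
    (hf_le : ∀ n, ∫ x, f n x ∂μ ≤ c) : Integrable F μ := by
  have hF_nonneg (x : α) : 0 ≤ F x := ge_of_tendsto' (hf_tendsto x) fun n ↦ hf_nonneg n x
  refine ⟨aestronglyMeasurable_of_tendsto_ae atTop (fun n ↦ (hf n).1) (ae_of_all _ hf_tendsto),
    (hasFiniteIntegral_iff_ofReal (ae_of_all _ hF_nonneg)).2 ?_⟩
  have h_mct := lintegral_tendsto_of_tendsto_of_monotone
    (fun n ↦ (hf n).aemeasurable.ennreal_ofReal)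
    (ae_of_all _ fun x _ _ hmn ↦ ENNReal.ofReal_le_ofReal (hf_mono x hmn))
    (ae_of_all _ fun x ↦ (ENNReal.continuous_ofReal.tendsto _).comp (hf_tendsto x))
  refine (le_of_tendsto' h_mct fun n ↦ ?_).trans_lt (ENNReal.ofReal_lt_top (r := c))
  rw [← ofReal_integral_eq_lintegral_ofReal (hf n) (ae_of_all _ (hf_nonneg n))]
  exact ENNReal.ofReal_le_ofReal (hf_le n)

end Bounded

lemma donskerVaradhan_le_integral_llr {α : Type*} [MeasurableSpace α] {μ ν : Measure α}
    [IsProbabilityMeasure μ] [IsProbabilityMeasure ν] {V : α → ℝ} (hμν : μ ≪ ν)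
    (h_int : Integrable (llr μ ν) μ) (hVμ : Integrable V μ)
    (hVν : Integrable (fun x ↦ Real.exp (V x)) ν) :
    donskerVaradhan μ ν V ≤ ∫ x, llr μ ν x ∂μ := by
  have := isProbabilityMeasure_tilted hVν
  have h_gibbs := InformationTheory.integral_llr_add_sub_measure_univ_nonneg
    (hμν.trans (absolutelyContinuous_tilted hVν)) (integrable_llr_tilted_right hμν hVμ h_int hVν)
  rw [integral_llr_tilted_right hμν hVμ hVν h_int] at h_gibbs
  simp only [probReal_univ, add_sub_cancel_right] at h_gibbs
  unfold donskerVaradhan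
  linarith

/-- Clamping `t` before taking the logarithm, rather than clamping `Real.log t`, keeps
`exp_truncLog_le` true at `t = 0`, where `Real.log 0 = 0`. -/
noncomputable def truncLog (a b t : ℝ) : ℝ :=
  Real.log (max (min t (Real.exp b)) (Real.exp a))

section TruncLog

variable {a b t : ℝ}

lemma measurable_truncLog : Measurable (truncLog a b) := by
  unfold truncLog; fun_prop

lemma truncLog_mem_Icc (hab : a ≤ b) : truncLog a b t ∈ Set.Icc a b := by
  have h_pos : 0 < max (min t (Real.exp b)) (Real.exp a) :=
    (Real.exp_pos a).trans_le (le_max_right _ _)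
  refine ⟨(Real.le_log_iff_exp_le h_pos).2 (le_max_right _ _),
    (Real.log_le_iff_le_exp h_pos).2 (max_le (min_le_right _ _) (Real.exp_le_exp.2 hab))⟩

lemma truncLog_of_pos (ht : 0 < t) : truncLog a b t = max (min (Real.log t) b) a := by
  have h_mono := Real.strictMonoOn_log.monotoneOn
  rw [truncLog, h_mono.map_max (lt_min ht (Real.exp_pos b)) (Real.exp_pos a),
    h_mono.map_min ht (Real.exp_pos b), Real.log_exp, Real.log_exp]

lemma exp_truncLog_le (ht : 0 ≤ t) : Real.exp (truncLog a b t) ≤ t + Real.exp a := by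
  rw [truncLog, Real.exp_log ((Real.exp_pos a).trans_le (le_max_right _ _))]
  exact max_le (by linarith [min_le_left t (Real.exp b), Real.exp_pos a]) (by linarith)

lemma monotone_truncLog (a t : ℝ) : Monotone fun b ↦ truncLog a b t := fun _ _ h ↦
  Real.log_le_log ((Real.exp_pos a).trans_le (le_max_right _ _))
    (max_le_max_right _ (min_le_min_left _ (Real.exp_le_exp.2 h)))

end TruncLog

lemma measurable_truncLog_rnDeriv {α : Type*} [MeasurableSpace α] (μ ν : Measure α) (a b : ℝ) :
    Measurable fun x ↦ truncLog a b (μ.rnDeriv ν x).toReal :=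
  measurable_truncLog.comp (μ.measurable_rnDeriv ν).ennreal_toReal

lemma abs_mul_min_log_le_one {t : ℝ} (ht : 0 ≤ t) : |t * min (Real.log t) 0| ≤ 1 := by
  rcases ht.eq_or_lt with rfl | ht
  · simp
  rcases le_total 1 t with h1 | h1
  · simp [Real.log_nonneg h1]
  · rw [min_eq_left (Real.log_nonpos ht.le h1), mul_comm]
    exact (Real.abs_log_mul_self_lt t ht h1).le

lemma integrable_min_llr_zero {α : Type*} [MeasurableSpace α] {μ ν : Measure α}
    [IsFiniteMeasure μ] [IsFiniteMeasure ν] (hμν : μ ≪ ν) :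
    Integrable (fun x ↦ min (llr μ ν x) 0) μ := by
  rw [← integrable_rnDeriv_smul_iff hμν]
  refine .of_bound (Measurable.aestronglyMeasurable ?_) 1 (ae_of_all _ fun x ↦ ?_)
  · exact (μ.measurable_rnDeriv ν).ennreal_toReal.smul ((measurable_llr μ ν).min measurable_const)
  · exact abs_mul_min_log_le_one ENNReal.toReal_nonneg

def DonskerVaradhanBound {α : Type*} [MeasurableSpace α] (μ ν : Measure α) (C : EReal) : Prop :=
  ∀ V : α → ℝ, Measurable V → ∀ M, (∀ x, |V x| ≤ M) → (donskerVaradhan μ ν V : EReal) ≤ C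

section LowerBounds

variable {α : Type*} [MeasurableSpace α] {μ ν : Measure α} [IsProbabilityMeasure μ]
  [IsProbabilityMeasure ν] {C : EReal}

lemma DonskerVaradhanBound.eq_top_of_not_absolutelyContinuous (hC : DonskerVaradhanBound μ ν C)
    (hμν : ¬ μ ≪ ν) : C = ⊤ := by
  obtain ⟨A, hA, hνA, hμA⟩ : ∃ A, MeasurableSet A ∧ ν A = 0 ∧ μ A ≠ 0 := by
    contrapose! hμν
    exact Measure.AbsolutelyContinuous.mk fun A hA hνA ↦ hμν A hA hνA
  have hμA_pos : 0 < μ.real A := ENNReal.toReal_pos hμA (measure_ne_top μ A)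
  refine (EReal.eq_top_iff_forall_lt C).2 fun r ↦ ?_
  obtain ⟨n, hn⟩ := exists_nat_gt (r / μ.real A)
  have h_exp : (fun x ↦ Real.exp (A.indicator (fun _ ↦ (n : ℝ)) x))
      = fun x ↦ A.indicator (fun _ ↦ Real.exp n - 1) x + 1 := by
    funext x
    by_cases hx : x ∈ A <;> simp [hx]
  have h_dv : donskerVaradhan μ ν (A.indicator fun _ ↦ (n : ℝ)) = n * μ.real A := by
    rw [donskerVaradhan, h_exp, integral_add ((integrable_const _).indicator hA)
      (integrable_const _), integral_indicator_const _ hA, integral_indicator_const _ hA]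
    simp [Measure.real, hνA, mul_comm]
  calc (r : EReal) < (n * μ.real A : ℝ) := EReal.coe_lt_coe_iff.2 ((div_lt_iff₀ hμA_pos).1 hn)
    _ ≤ C := h_dv ▸ hC _ (measurable_const.indicator hA) n fun x ↦ by
        by_cases hx : x ∈ A <;> simp [hx]

lemma DonskerVaradhanBound.integral_truncLog_sub_le (hC : DonskerVaradhanBound μ ν C)
    (hμν : μ ≪ ν) {a b : ℝ} (hab : a ≤ b) :
    ((∫ x, truncLog a b (μ.rnDeriv ν x).toReal ∂μ - Real.log (1 + Real.exp a) : ℝ) : EReal)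
      ≤ C := by
  set V : α → ℝ := fun x ↦ truncLog a b (μ.rnDeriv ν x).toReal
  have hV_bdd (x : α) : |V x| ≤ max |a| |b| :=
    abs_le_max_abs_abs (truncLog_mem_Icc hab).1 (truncLog_mem_Icc hab).2
  have h_exp_int := integrable_exp_of_abs_le (μ := ν) (measurable_truncLog_rnDeriv μ ν a b) hV_bdd
  have h_exp_le : ∫ x, Real.exp (V x) ∂ν ≤ 1 + Real.exp a := by
    calc ∫ x, Real.exp (V x) ∂ν ≤ ∫ x, ((μ.rnDeriv ν x).toReal + Real.exp a) ∂ν :=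
          integral_mono h_exp_int (Measure.integrable_toReal_rnDeriv.add (integrable_const _))
            fun x ↦ exp_truncLog_le ENNReal.toReal_nonneg
      _ = 1 + Real.exp a := by
          rw [integral_add Measure.integrable_toReal_rnDeriv (integrable_const _),
            Measure.integral_toReal_rnDeriv hμν]
          simp
  refine le_trans (EReal.coe_le_coe_iff.2 ?_) (hC V (measurable_truncLog_rnDeriv μ ν a b) _ hV_bdd)
  have := Real.log_le_log (integral_exp_pos h_exp_int) h_exp_le
  unfold donskerVaradhan
  linarith

lemma DonskerVaradhanBound.integral_llr_le (hC : DonskerVaradhanBound μ ν C) (hμν : μ ≪ ν)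
    (h_int : Integrable (llr μ ν) μ) : ((∫ x, llr μ ν x ∂μ : ℝ) : EReal) ≤ C := by
  have h_trunc : ∀ᵐ x ∂μ, ∀ n : ℕ,
      truncLog (-n) n (μ.rnDeriv ν x).toReal = max (min (llr μ ν x) n) (-n) := by
    filter_upwards [Measure.rnDeriv_pos hμν, hμν.ae_le (Measure.rnDeriv_lt_top μ ν)]
      with x h_pos h_lt_top n
    exact truncLog_of_pos (ENNReal.toReal_pos h_pos.ne' h_lt_top.ne)
  have h_lim : Tendsto (fun n : ℕ ↦ ∫ x, truncLog (-n) n (μ.rnDeriv ν x).toReal ∂μ) atTop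
      (𝓝 (∫ x, llr μ ν x ∂μ)) := by
    refine tendsto_integral_of_dominated_convergence (fun x ↦ |llr μ ν x|)
      (fun n ↦ (measurable_truncLog_rnDeriv μ ν _ _).aestronglyMeasurable) h_int.abs
      (fun n ↦ ?_) ?_
    · filter_upwards [h_trunc] with x hx
      simpa [hx n] using abs_clamp_sub_le (a := llr μ ν x) (b := 0) (M := n) (by simp)
    · filter_upwards [h_trunc] with x hx
      refine tendsto_const_nhds.congr' ?_
      filter_upwards [eventually_ge_atTop ⌈|llr μ ν x|⌉₊] with n hn
      have h_abs := abs_le.1 (Nat.ceil_le.1 hn)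
      rw [hx n, min_eq_left h_abs.2, max_eq_left h_abs.1]
  have h_log : Tendsto (fun n : ℕ ↦ Real.log (1 + Real.exp (-n))) atTop (𝓝 0) := by
    have := ((Real.tendsto_exp_neg_atTop_nhds_zero.comp tendsto_natCast_atTop_atTop).const_add
      1).log (by norm_num)
    simpa using this
  refine le_of_tendsto' (EReal.tendsto_coe.2 (by simpa using h_lim.sub h_log)) fun n ↦ ?_
  exact hC.integral_truncLog_sub_le hμν (neg_le_self n.cast_nonneg)

lemma DonskerVaradhanBound.integrable_llr (hC : DonskerVaradhanBound μ ν C) (hμν : μ ≪ ν)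
    (hC_top : C ≠ ⊤) : Integrable (llr μ ν) μ := by
  have h_pos_part : Integrable (fun x ↦ max (llr μ ν x) 0) μ := by
    refine integrable_of_monotone_of_integral_le
      (f := fun (n : ℕ) x ↦ truncLog 0 n (μ.rnDeriv ν x).toReal) (c := C.toReal + Real.log 2)
      (fun n ↦ integrable_of_abs_le (measurable_truncLog_rnDeriv μ ν _ _) fun x ↦
        abs_le_max_abs_abs (truncLog_mem_Icc n.cast_nonneg).1 (truncLog_mem_Icc n.cast_nonneg).2)
      (fun n x ↦ (truncLog_mem_Icc n.cast_nonneg).1)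
      (fun x ↦ (monotone_truncLog 0 _).comp Nat.mono_cast) (fun x ↦ ?_) fun n ↦ ?_
    · rcases (ENNReal.toReal_nonneg (a := μ.rnDeriv ν x)).eq_or_lt with h_zero | h_pos
      · simp [llr, ← h_zero, truncLog]
      refine tendsto_const_nhds.congr' ?_
      filter_upwards [eventually_ge_atTop ⌈llr μ ν x⌉₊] with n hn
      rw [truncLog_of_pos h_pos]
      exact congrArg (max · 0) (min_eq_left (Nat.ceil_le.1 hn)).symm
    · have := (hC.integral_truncLog_sub_le hμν (n.cast_nonneg (α := ℝ))).trans
        (EReal.le_coe_toReal hC_top)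
      rw [EReal.coe_le_coe_iff, Real.exp_zero, one_add_one_eq_two] at this
      linarith
  refine (h_pos_part.add (integrable_min_llr_zero hμν)).congr (ae_of_all _ fun x ↦ ?_)
  simp only [Pi.add_apply, max_add_min, add_zero]

end LowerBounds

section CompactMetric

variable {X : Type*} [MetricSpace X] [MeasurableSpace X] [BorelSpace X]
  {μ π : Measure X} [IsProbabilityMeasure μ] [IsProbabilityMeasure π]

lemma donskerVaradhanBound_iSup_continuous :
    DonskerVaradhanBound μ π (⨆ W : C(X, ℝ), (donskerVaradhan μ π W : EReal)) := by
  intro V hV M hVM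
  refine EReal.ge_of_forall_gt_iff_ge.1 fun z hz ↦ ?_
  set δ := (donskerVaradhan μ π V - z) / (1 + Real.exp (2 * M)) with hδ
  have hδ_pos : 0 < δ := div_pos (sub_pos.2 (EReal.coe_lt_coe_iff.1 hz)) (by positivity)
  obtain ⟨g, hg, hg_int⟩ :=
    (integrable_of_abs_le (μ := μ + π) hV hVM).exists_boundedContinuous_integral_sub_le hδ_pos
  have hM : 0 ≤ M := (abs_nonneg _).trans (hVM (nonempty_of_isProbabilityMeasure μ).some)
  let W : C(X, ℝ) := ⟨fun x ↦ max (min (g x) M) (-M), by fun_prop⟩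
  have hWM (x : X) : |W x| ≤ M :=
    abs_le.2 ⟨le_max_right _ _, max_le (min_le_right _ _) (by linarith)⟩
  have hVW (x : X) : |V x - W x| ≤ ‖V x - g x‖ := by
    rw [abs_sub_comm, Real.norm_eq_abs, abs_sub_comm (V x)]
    exact abs_clamp_sub_le (hVM x)
  have h_dist {ρ : Measure X} (hρ : ρ ≤ μ + π) : ∫ x, |V x - W x| ∂ρ ≤ δ := by
    have h_int := ((integrable_of_abs_le hV hVM).sub hg_int).norm
    calc ∫ x, |V x - W x| ∂ρ ≤ ∫ x, ‖V x - g x‖ ∂ρ :=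
          integral_mono_of_nonneg (ae_of_all _ fun x ↦ abs_nonneg _)
            (h_int.mono_measure hρ) (ae_of_all _ hVW)
      _ ≤ ∫ x, ‖V x - g x‖ ∂(μ + π) :=
          integral_mono_measure hρ (ae_of_all _ fun x ↦ norm_nonneg _) h_int
      _ ≤ δ := hg
  have h_near := donskerVaradhan_le_add (μ := μ) (ν := π) hV W.continuous.measurable hVM hWM
  have h_split : δ + Real.exp (2 * M) * δ = donskerVaradhan μ π V - z := by
    rw [hδ]; field_simp
  calc (z : EReal) ≤ (donskerVaradhan μ π W : EReal) := by
        refine EReal.coe_le_coe_iff.2 ?_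
        nlinarith [h_dist (Measure.le_add_right le_rfl), h_dist (Measure.le_add_left le_rfl),
          Real.exp_pos (2 * M)]
    _ ≤ ⨆ W : C(X, ℝ), (donskerVaradhan μ π W : EReal) :=
        le_iSup (fun W : C(X, ℝ) ↦ (donskerVaradhan μ π W : EReal)) W

lemma iSup_continuous_le_integral_llr [CompactSpace X] (hμπ : μ ≪ π)
    (h_int : Integrable (llr μ π) μ) :
    ⨆ W : C(X, ℝ), (donskerVaradhan μ π W : EReal) ≤ ((∫ x, llr μ π x ∂μ : ℝ) : EReal) :=
  iSup_le fun W ↦ EReal.coe_le_coe_iff.2 <| donskerVaradhan_le_integral_llr hμπ h_int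
    ((BoundedContinuousFunction.mkOfCompact W).integrable μ)
    ((BoundedContinuousFunction.mkOfCompact ⟨fun x ↦ Real.exp (W x), by fun_prop⟩).integrable π)

end CompactMetric

/-- the relative entropy
`H(μ,π) = sup_{V ∈ C(X)} (∫ V dμ - log ∫ e^V dπ)` is finite iff `μ ≪ π` and
`log ψ ∈ L¹(μ)` for `ψ = dμ/dπ`, in which case
`H(μ,π) = ∫ log ψ dμ = ∫ ψ log ψ dπ`. -/
theorem stmt_6 {X : Type*} [MetricSpace X] [CompactSpace X]
    [MeasurableSpace X] [BorelSpace X]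
    (μ π : Measure X) [IsProbabilityMeasure μ] [IsProbabilityMeasure π]
    (H : EReal)
    (hH : H = ⨆ V : C(X, ℝ),
      (((∫ x, V x ∂μ) - Real.log (∫ x, Real.exp (V x) ∂π) : ℝ) : EReal)) :
    (H ≠ ⊤ ↔ μ ≪ π ∧ Integrable (fun x => Real.log (μ.rnDeriv π x).toReal) μ)
    ∧ (μ ≪ π → Integrable (fun x => Real.log (μ.rnDeriv π x).toReal) μ →
        H = ((∫ x, Real.log (μ.rnDeriv π x).toReal ∂μ : ℝ) : EReal)
        ∧ ∫ x, Real.log (μ.rnDeriv π x).toReal ∂μ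
            = ∫ x, (μ.rnDeriv π x).toReal * Real.log (μ.rnDeriv π x).toReal ∂π) := by
  change H = ⨆ W : C(X, ℝ), (donskerVaradhan μ π W : EReal) at hH
  have hC : DonskerVaradhanBound μ π H := hH ▸ donskerVaradhanBound_iSup_continuous
  have h_eq (hμπ : μ ≪ π) (h_int : Integrable (llr μ π) μ) :
      H = ((∫ x, llr μ π x ∂μ : ℝ) : EReal) :=
    le_antisymm (hH ▸ iSup_continuous_le_integral_llr hμπ h_int) (hC.integral_llr_le hμπ h_int)
  refine ⟨⟨fun h_top ↦ ?_, fun ⟨hμπ, h_int⟩ ↦ h_eq hμπ h_int ▸ EReal.coe_ne_top _⟩,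
    fun hμπ h_int ↦ ⟨h_eq hμπ h_int, (integral_rnDeriv_mul_log hμπ).symm⟩⟩
  have hμπ : μ ≪ π := by
    by_contra hμπ
    exact h_top (hC.eq_top_of_not_absolutelyContinuous hμπ)
  exact ⟨hμπ, hC.integrable_llr hμπ h_top⟩
end

section
/- Hohenberg–Kohn uniqueness via strict inequalities: Suppose μ₁, μ₂ are symmetric equilibrium measures for V₀+V₁, V₀+V₂ respectively, where V₁, V₂ are separable potentials arising from v₁, v₂ ∈ C(X), and suppose the marginals satisfy ρ₁ = ρ₂. If μ₁ is NOT an equilibrium measure for V₀+V₂ and μ₂ is NOT an equilibrium measure for V₀+V₁, then one derives the contradiction ρ₁(v₂-v₁) < λ_{V₀+V₂} - λ_{V₀+V₁} and ρ₂(v₁-v₂) < λ_{V₀+V₁} - λ_{V₀+V₂}. Hence either μ₁ is an equilibrium measure for V₀+V₂ or μ₂ is one for V₀+V₁. -/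
open MeasureTheory Filter Topology
open scoped ENNReal NNReal

/-!
Write `W₁ = V₀ + V₁`, `W₂ = V₀ + V₂`. If `μ₁` is an equilibrium measure for `W₁` but not for
`W₂`, the Donsker–Varadhan bound for `W₂` at `μ₁` is strict, and subtracting the equality for
`W₁` gives `μ₁(V₂ - V₁) < λ_{W₂} - λ_{W₁}`. Symmetrically `μ₂(V₁ - V₂) < λ_{W₁} - λ_{W₂}`.
By exchangeability, a separable potential integrates to the integral of its one-body part against
the marginal, so `μ₁(V₂ - V₁) = ρ(v₂ - v₁) = μ₂(V₂ - V₁)`, and the two strict inequalities add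
up to `0 < 0`.
-/

def IsEquilibrium {Ω : Type*} [TopologicalSpace Ω] [MeasurableSpace Ω]
    (I : ProbabilityMeasure Ω → EReal) (lam : C(Ω, ℝ) → ℝ) (W : C(Ω, ℝ))
    (μ : ProbabilityMeasure Ω) : Prop :=
  (lam W : EReal) = ((∫ y, W y ∂(μ : Measure Ω) : ℝ) : EReal) - I μ

theorem EReal.eq_coe_sub_of_coe_eq_coe_sub {a b : ℝ} {e : EReal}
    (h : (a : EReal) = b - e) : e = ((b - a : ℝ) : EReal) := by
  induction e using EReal.rec with
  | bot => exact absurd h (by simp)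
  | top => exact absurd h (by simp)
  | coe r =>
    rw [← EReal.coe_sub, EReal.coe_eq_coe_iff] at h
    rw [EReal.coe_eq_coe_iff]
    linarith

theorem integral_sub_integral_lt_of_isEquilibrium {Ω : Type*} [TopologicalSpace Ω]
    [MeasurableSpace Ω] {I : ProbabilityMeasure Ω → EReal} {lam : C(Ω, ℝ) → ℝ}
    (hDV : ∀ (W : C(Ω, ℝ)) (μ : ProbabilityMeasure Ω),
      ((∫ y, W y ∂(μ : Measure Ω) : ℝ) : EReal) - I μ ≤ (lam W : EReal))
    {W W' : C(Ω, ℝ)} {μ : ProbabilityMeasure Ω} (hW : IsEquilibrium I lam W μ)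
    (hW' : ¬ IsEquilibrium I lam W' μ) :
    ∫ y, W' y ∂(μ : Measure Ω) - ∫ y, W y ∂(μ : Measure Ω) < lam W' - lam W := by
  have hI := EReal.eq_coe_sub_of_coe_eq_coe_sub hW
  have hle := hDV W' μ
  unfold IsEquilibrium at hW'
  rw [hI, ← EReal.coe_sub, EReal.coe_le_coe_iff] at hle
  rw [hI, ← EReal.coe_sub, EReal.coe_eq_coe_iff] at hW'
  have := lt_of_le_of_ne hle (Ne.symm hW')
  linarith

theorem Continuous.integrable_of_compactSpace {Ω : Type*} [TopologicalSpace Ω] [CompactSpace Ω]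
    [MeasurableSpace Ω] [OpensMeasurableSpace Ω] {E : Type*} [NormedAddCommGroup E]
    {μ : Measure Ω} [IsFiniteMeasure μ] {f : Ω → E} (hf : Continuous f) : Integrable f μ :=
  hf.integrable_of_hasCompactSupport (.of_compactSpace f)

section Exchangeable

variable {ι X E : Type*} [MeasurableSpace X] [NormedAddCommGroup E] [NormedSpace ℝ E]
  {μ : Measure (ι → X)}

theorem integral_comp_eval_eq_of_perm_invariant [DecidableEq ι]
    (hsym : ∀ σ : Equiv.Perm ι, μ.map (fun y i => y (σ i)) = μ) (f : X → E) (i j : ι) :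
    ∫ y, f (y i) ∂μ = ∫ y, f (y j) ∂μ := by
  let e : (ι → X) ≃ᵐ (ι → X) := .arrowCongr' (Equiv.swap i j).symm (.refl X)
  have he : MeasurePreserving e μ μ := ⟨e.measurable, hsym (Equiv.swap i j)⟩
  rw [← he.integral_comp' (fun y => f (y j))]
  simp [e, MeasurableEquiv.arrowCongr', Equiv.arrowCongr']

theorem integral_card_inv_smul_sum_comp_eval_of_perm_invariant [Fintype ι] [DecidableEq ι]
    (hsym : ∀ σ : Equiv.Perm ι, μ.map (fun y i => y (σ i)) = μ) {f : X → E}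
    (hf : ∀ i, Integrable (fun y => f (y i)) μ) (i₀ : ι) :
    ∫ y, (Fintype.card ι : ℝ)⁻¹ • ∑ i, f (y i) ∂μ = ∫ y, f (y i₀) ∂μ := by
  rw [integral_smul, integral_finsetSum _ fun i _ => hf i]
  simp only [integral_comp_eval_eq_of_perm_invariant hsym f _ i₀, Finset.sum_const,
    Finset.card_univ]
  have hcard : (Fintype.card ι : ℝ) ≠ 0 :=
    Nat.cast_ne_zero.mpr (Fintype.card_pos_iff.mpr ⟨i₀⟩).ne'
  rw [← Nat.cast_smul_eq_nsmul ℝ, smul_smul, inv_mul_cancel₀ hcard, one_smul]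

end Exchangeable

theorem integral_separable_of_perm_invariant {X : Type*} [MetricSpace X] [CompactSpace X]
    [MeasurableSpace X] [BorelSpace X] {N : ℕ} {μ : Measure (Fin N → X)} [IsFiniteMeasure μ]
    (hsym : ∀ σ : Equiv.Perm (Fin N), μ.map (fun y i => y (σ i)) = μ)
    {V : C(Fin N → X, ℝ)} {v : C(X, ℝ)} (hV : ∀ y : Fin N → X, V y = (∑ i, v (y i)) / N)
    (i₀ : Fin N) : ∫ y, V y ∂μ = ∫ y, v (y i₀) ∂μ := by
  rw [← integral_card_inv_smul_sum_comp_eval_of_perm_invariant hsym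
    (fun i => (v.continuous.comp (continuous_apply i)).integrable_of_compactSpace) i₀]
  simp [hV, div_eq_inv_mul]

/-- Hohenberg–Kohn via strict inequalities.  In the
Donsker–Varadhan setting on `X^N`, if `μ₁, μ₂` are symmetric equilibrium
measures for `V₀+V₁`, `V₀+V₂` (with `V₁, V₂` separable, arising from
`v₁, v₂ ∈ C(X)`) whose 1-particle marginals coincide, then `μ₁` is an
equilibrium measure for `V₀+V₂` or `μ₂` is one for `V₀+V₁`. -/
theorem stmt_17 {X : Type*} [MetricSpace X] [CompactSpace X]
    [MeasurableSpace X] [BorelSpace X]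
    (N : ℕ) (hN : 0 < N)
    -- abstract Donsker–Varadhan rate function and principal eigenvalue
    (I : ProbabilityMeasure (Fin N → X) → EReal)
    (lam : C(Fin N → X, ℝ) → ℝ)
    (hDV : ∀ (W : C(Fin N → X, ℝ)) (μ : ProbabilityMeasure (Fin N → X)),
      ((∫ y, W y ∂(μ : Measure (Fin N → X)) : ℝ) : EReal) - I μ ≤ (lam W : EReal))
    -- potentials: `V₀` symmetric-type background, `V₁, V₂` separable from `v₁, v₂`
    (V₀ V₁ V₂ : C(Fin N → X, ℝ)) (v₁ v₂ : C(X, ℝ))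
    (hV₁ : ∀ y : Fin N → X, V₁ y = (∑ i, v₁ (y i)) / N)
    (hV₂ : ∀ y : Fin N → X, V₂ y = (∑ i, v₂ (y i)) / N)
    -- symmetric equilibrium measures
    (μ₁ μ₂ : ProbabilityMeasure (Fin N → X))
    (hsym₁ : ∀ σ : Equiv.Perm (Fin N),
      (μ₁ : Measure (Fin N → X)).map (fun y i => y (σ i)) = μ₁)
    (hsym₂ : ∀ σ : Equiv.Perm (Fin N),
      (μ₂ : Measure (Fin N → X)).map (fun y i => y (σ i)) = μ₂)
    (hE₁ : (lam (V₀ + V₁) : EReal) =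
      ((∫ y, (V₀ + V₁) y ∂(μ₁ : Measure (Fin N → X)) : ℝ) : EReal) - I μ₁)
    (hE₂ : (lam (V₀ + V₂) : EReal) =
      ((∫ y, (V₀ + V₂) y ∂(μ₂ : Measure (Fin N → X)) : ℝ) : EReal) - I μ₂)
    -- the 1-particle marginals
    (ρ₁ ρ₂ : ProbabilityMeasure X)
    (hρ₁ : ∀ f : C(X, ℝ), ∫ x, f x ∂(ρ₁ : Measure X)
      = ∫ y, f (y ⟨0, hN⟩) ∂(μ₁ : Measure (Fin N → X)))
    (hρ₂ : ∀ f : C(X, ℝ), ∫ x, f x ∂(ρ₂ : Measure X)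
      = ∫ y, f (y ⟨0, hN⟩) ∂(μ₂ : Measure (Fin N → X)))
    (hρ : ρ₁ = ρ₂) :
    ((lam (V₀ + V₂) : EReal) =
      ((∫ y, (V₀ + V₂) y ∂(μ₁ : Measure (Fin N → X)) : ℝ) : EReal) - I μ₁)
    ∨ ((lam (V₀ + V₁) : EReal) =
      ((∫ y, (V₀ + V₁) y ∂(μ₂ : Measure (Fin N → X)) : ℝ) : EReal) - I μ₂) := by
  by_contra! h
  have gap₁ := integral_sub_integral_lt_of_isEquilibrium hDV hE₁ h.1
  have gap₂ := integral_sub_integral_lt_of_isEquilibrium hDV hE₂ h.2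
  have split (μ : ProbabilityMeasure (Fin N → X)) (V : C(Fin N → X, ℝ)) :
      ∫ y, (V₀ + V) y ∂(μ : Measure (Fin N → X))
        = ∫ y, V₀ y ∂(μ : Measure (Fin N → X)) + ∫ y, V y ∂(μ : Measure (Fin N → X)) :=
    integral_add V₀.continuous.integrable_of_compactSpace V.continuous.integrable_of_compactSpace
  rw [split, split] at gap₁ gap₂
  rw [integral_separable_of_perm_invariant hsym₁ hV₁ ⟨0, hN⟩,
    integral_separable_of_perm_invariant hsym₁ hV₂ ⟨0, hN⟩, ← hρ₁, ← hρ₁] at gap₁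
  rw [integral_separable_of_perm_invariant hsym₂ hV₁ ⟨0, hN⟩,
    integral_separable_of_perm_invariant hsym₂ hV₂ ⟨0, hN⟩, ← hρ₂, ← hρ₂, ← hρ] at gap₂
  linarith
end
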